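/- In the level-set setting, let p : U → ℝ be differentiable at x and regard P(y) = I − N(y) as the rank-2 tensor field P(y)(a,b) := ⟨a, P(y) b⟩. Then, with all submanifold operators taken with respect to the projection P(x), for every a ∈ ℝⁿ: (Div_M(y ↦ p(y)·P(y))(x))(a) = Dp(x)[P(x) a] − p(x)·⟨κ(x), a⟩. Consequently, since P(x)κ(x) = 0, the tangential projection of Div_M(pP) equals the submanifold gradient of p: (Div_M(pP)(x))(P(x) a) = Dp(x)[P(x) a] for all a ∈ ℝⁿ. -/

import Mathlib

noncomputable section

open scoped RealInnerProductSpace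

/-- Euclidean space `ℝⁿ`. -/
abbrev E (n : ℕ) := EuclideanSpace ℝ (Fin n)

/-- The standard orthonormal basis vector `e_k` of `ℝⁿ`. -/
def stdb (n : ℕ) (k : Fin n) : E n := EuclideanSpace.single k 1

/-- The submanifold divergence of a vector field `v` at `y`, with respect to the
projection field `P(y) = I − N(y)`:
`div_M v(y) := Σ_k ⟨Dv(y)[P(y) e_k], e_k⟩`. -/
def divM (n : ℕ) (Nf : E n → (E n →L[ℝ] E n)) (v : E n → E n) (y : E n) : ℝ :=
  ∑ k, ⟪fderiv ℝ v y (stdb n k - Nf y (stdb n k)), stdb n k⟫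

/-- The mean curvature vector, defined componentwise by
`κ_j(y) := div_M(z ↦ N(z) e_j)(y)`. -/
def kappa (n : ℕ) (Nf : E n → (E n →L[ℝ] E n)) (y : E n) : E n :=
  ∑ j, (divM n Nf (fun z => Nf z (stdb n j)) y) • stdb n j

/-!
Differentiating the constraints `⟪N y a, b⟫ = ⟪a, N y b⟫` and `N y ∘ N y = N y` at `x` shows that
each `A = DN(x)[h]` is symmetric and satisfies `A N + N A = A`, where `N = N(x)`, `P = 1 - N`.
By the product rule, the `k`-th term of `Div_M(pP)(a)` is
`⟪a, P e_k⟫ Dp(x)[P e_k] - p(x) ⟪a, DN(x)[P e_k] e_k⟫`; the first terms sum to `Dp(x)[P a]`,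
and by symmetry of `DN(x)[h]` the second ones sum to `p(x) ⟪κ(x), a⟫`, where
`κ(x) = ∑ₖ DN(x)[P e_k] e_k`.
The second identity is the first one at `P a`, once `P κ(x) = 0`: from `A N + N A = A` one gets
`P A P = 0`, and moving the symmetric `N` across the trace `∑ₖ` turns the remaining part of
`P κ(x)` into terms containing `P N = 0`.
-/

open Filter Topology

theorem HasFDerivAt.eq_zero_of_eventuallyEq_zero {F G : Type*} [NormedAddCommGroup F]
    [NormedSpace ℝ F] [NormedAddCommGroup G] [NormedSpace ℝ G] {f : F → G} {f' : F →L[ℝ] G}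
    {x : F} (hf : HasFDerivAt f f' x) (h0 : f =ᶠ[𝓝 x] fun _ => 0) : f' = 0 :=
  hf.unique ((hasFDerivAt_const 0 x).congr_of_eventuallyEq h0)

theorem IsIdempotentElem.sub_apply_sub_apply {R M : Type*} [Semiring R] [AddCommGroup M]
    [Module R M] [TopologicalSpace M] {N₀ : M →L[R] M} (hN₀ : IsIdempotentElem N₀) (v : M) :
    v - N₀ v - N₀ (v - N₀ v) = v - N₀ v := by
  rw [map_sub, ← mul_apply_eq_comp, hN₀.eq, sub_self, sub_zero]

section InnerProductSpace

variable {F : Type*} [NormedAddCommGroup F] [InnerProductSpace ℝ F]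

namespace OrthonormalBasis

variable {ι : Type*} [Fintype ι] (b : OrthonormalBasis ι ℝ F)

theorem sum_inner_smul_apply {M : Type*} [AddCommGroup M] [Module ℝ M] (T : F →ₗ[ℝ] M)
    (a : F) : ∑ i, ⟪a, b i⟫ • T (b i) = T a := by
  conv_rhs => rw [← b.sum_repr' a]
  simp only [map_sum, map_smul, real_inner_comm]

theorem sum_apply_apply_of_isSymmetric {G : Type*} [NormedAddCommGroup G] [NormedSpace ℝ G]
    (B : F →L[ℝ] F →L[ℝ] G) {S : F →L[ℝ] F} (hS : (S : F →ₗ[ℝ] F).IsSymmetric) :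
    ∑ i, B (b i) (S (b i)) = ∑ i, B (S (b i)) (b i) := by
  calc ∑ i, B (b i) (S (b i)) = ∑ i, ∑ j, ⟪b j, S (b i)⟫ • B (b i) (b j) := by
        refine Finset.sum_congr rfl fun i _ => ?_
        conv_lhs => rw [← b.sum_repr' (S (b i))]
        simp only [map_sum, map_smul]
    _ = ∑ j, ∑ i, ⟪b i, S (b j)⟫ • B (b i) (b j) := by
        rw [Finset.sum_comm]
        refine Finset.sum_congr rfl fun j _ => Finset.sum_congr rfl fun i _ => ?_
        rw [← ContinuousLinearMap.coe_coe S, ← hS, real_inner_comm]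
    _ = ∑ j, B (S (b j)) (b j) := by
        refine Finset.sum_congr rfl fun j _ => ?_
        conv_rhs => rw [← b.sum_repr' (S (b j))]
        simp only [map_sum, map_smul, sum_apply, smul_apply]

def tangentialTrace (N₀ : F →L[ℝ] F) (A : F →L[ℝ] F →L[ℝ] F) : F :=
  ∑ i, A (b i - N₀ (b i)) (b i)

theorem apply_tangentialTrace {N₀ : F →L[ℝ] F} (hsym : (N₀ : F →ₗ[ℝ] F).IsSymmetric)
    (hidem : IsIdempotentElem N₀) {A : F →L[ℝ] F →L[ℝ] F}
    (hA : ∀ h, A h * N₀ + N₀ * A h = A h) :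
    N₀ (b.tangentialTrace N₀ A) = b.tangentialTrace N₀ A := by
  set P : F →L[ℝ] F := 1 - N₀ with hP
  have hPAP : ∀ h, P * A h * P = 0 := fun h => by
    rw [mul_assoc, hP, mul_sub, mul_one, sub_eq_of_eq_add' (hA h).symm, ← mul_assoc,
      hidem.one_sub_mul_self, zero_mul]
  let B : F →L[ℝ] F →L[ℝ] F := (ContinuousLinearMap.compL ℝ F F F P).comp (A.comp P)
  have hB_right : ∀ h v, B h v = B h (N₀ v) := fun h v => by
    have := congr($(hPAP (P h)) v)
    simp only [mul_apply_eq_comp, zero_apply, hP, sub_apply, one_apply_eq_self, map_sub] at this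
    simpa [B, hP, sub_eq_zero] using this
  have hB_left : ∀ h v, B (N₀ h) v = 0 := fun h v => by
    have hPN : P (N₀ h) = 0 := by
      rw [← mul_apply_eq_comp, hP, hidem.one_sub_mul_self, zero_apply]
    simp [B, hPN]
  have hPtrace : P (b.tangentialTrace N₀ A) = ∑ i, B (b i) (b i) := by
    rw [tangentialTrace, map_sum]
    rfl
  have htrace : ∑ i, B (b i) (b i) = 0 := by
    calc ∑ i, B (b i) (b i) = ∑ i, B (b i) (N₀ (b i)) := by simp_rw [← hB_right]
      _ = ∑ i, B (N₀ (b i)) (b i) := b.sum_apply_apply_of_isSymmetric B hsym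
      _ = 0 := by simp [hB_left]
  rw [htrace, hP, sub_apply, one_apply_eq_self, sub_eq_zero] at hPtrace
  exact hPtrace.symm

end OrthonormalBasis

section ProjectionField

variable {N : F → F →L[ℝ] F} {x : F}

theorem isSymmetric_fderiv_apply_of_eventually (hN : DifferentiableAt ℝ N x)
    (hsym : ∀ᶠ y in 𝓝 x, (N y : F →ₗ[ℝ] F).IsSymmetric) (h : F) :
    (fderiv ℝ N x h : F →ₗ[ℝ] F).IsSymmetric := by
  intro u v
  let L : (F →L[ℝ] F) →L[ℝ] ℝ := (innerSL ℝ v).comp (ContinuousLinearMap.apply ℝ F u) -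
    (innerSL ℝ u).comp (ContinuousLinearMap.apply ℝ F v)
  have hL : L.comp (fderiv ℝ N x) = 0 :=
    (L.hasFDerivAt.comp x hN.hasFDerivAt).eq_zero_of_eventuallyEq_zero <|
      hsym.mono fun y hy => sub_eq_zero.2 ((real_inner_comm _ _).trans (hy u v))
  rw [real_inner_comm]
  simpa [L, sub_eq_zero] using congr($hL h)

theorem fderiv_mul_add_mul_of_eventually_isIdempotentElem (hN : DifferentiableAt ℝ N x)
    (hidem : ∀ᶠ y in 𝓝 x, IsIdempotentElem (N y)) (h : F) :
    fderiv ℝ N x h * N x + N x * fderiv ℝ N x h = fderiv ℝ N x h := by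
  have hderiv := (hN.hasFDerivAt.mul' hN.hasFDerivAt).sub hN.hasFDerivAt
  have hzero := hderiv.eq_zero_of_eventuallyEq_zero <| hidem.mono fun y hy => by simp [hy.eq]
  rw [add_comm]
  simpa [sub_eq_zero] using congr($hzero h)

theorem fderiv_mul_inner_sub_apply {p : F → ℝ} (hp : DifferentiableAt ℝ p x)
    (hN : DifferentiableAt ℝ N x) (a v h : F) :
    fderiv ℝ (fun y => p y * ⟪a, v - N y v⟫) x h =
      ⟪a, v - N x v⟫ * fderiv ℝ p x h - p x * ⟪a, fderiv ℝ N x h v⟫ := by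
  have hNv : HasFDerivAt (fun y => N y v) ((fderiv ℝ N x).flip v) x := by
    simpa using hN.hasFDerivAt.clm_apply (hasFDerivAt_const v x)
  have hinner : HasFDerivAt (fun y => ⟪a, v - N y v⟫) _ x :=
    (innerSL ℝ a).hasFDerivAt.comp x (hNv.const_sub v)
  rw [(hp.hasFDerivAt.fun_mul hinner).fderiv]
  simp only [add_apply, smul_apply, ContinuousLinearMap.comp_apply, neg_apply,
    ContinuousLinearMap.flip_apply, innerSL_apply_apply, inner_neg_right, smul_eq_mul]
  ring

theorem OrthonormalBasis.sum_fderiv_mul_inner_sub_apply {ι : Type*} [Fintype ι]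
    (b : OrthonormalBasis ι ℝ F) {p : F → ℝ} (hp : DifferentiableAt ℝ p x)
    (hN : DifferentiableAt ℝ N x) (hsym : (N x : F →ₗ[ℝ] F).IsSymmetric)
    (hidem : IsIdempotentElem (N x)) (a : F) :
    ∑ i, fderiv ℝ (fun y => p y * ⟪a, b i - N y (b i)⟫) x (b i - N x (b i)) =
      fderiv ℝ p x (a - N x a) - p x * ⟪b.tangentialTrace (N x) (fderiv ℝ N x), a⟫ := by
  simp_rw [fderiv_mul_inner_sub_apply hp hN]
  rw [Finset.sum_sub_distrib, tangentialTrace, sum_inner, Finset.mul_sum]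
  congr 1
  · have hT := b.sum_inner_smul_apply ((fderiv ℝ p x).comp (1 - N x) : F →ₗ[ℝ] ℝ) (a - N x a)
    simp only [ContinuousLinearMap.coe_coe, ContinuousLinearMap.comp_apply, sub_apply,
      one_apply_eq_self, hidem.sub_apply_sub_apply, smul_eq_mul] at hT
    rw [← hT]
    refine Finset.sum_congr rfl fun i _ => ?_
    rw [inner_sub_left, inner_sub_right, ← ContinuousLinearMap.coe_coe, hsym]
  · exact Finset.sum_congr rfl fun i _ => by rw [real_inner_comm]

end ProjectionField

end InnerProductSpace

theorem stdb_eq_basisFun (n : ℕ) : stdb n = ⇑(EuclideanSpace.basisFun (Fin n) ℝ) := by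
  funext k
  rw [stdb, EuclideanSpace.basisFun_apply]

theorem kappa_eq_tangentialTrace {n : ℕ} {Nf : E n → E n →L[ℝ] E n} {x : E n}
    (hN : DifferentiableAt ℝ Nf x)
    (hsym : ∀ h, (fderiv ℝ Nf x h : E n →ₗ[ℝ] E n).IsSymmetric) :
    kappa n Nf x =
      (EuclideanSpace.basisFun (Fin n) ℝ).tangentialTrace (Nf x) (fderiv ℝ Nf x) := by
  rw [kappa, stdb_eq_basisFun]
  set b := EuclideanSpace.basisFun (Fin n) ℝ with hb
  have hdiv : ∀ j, divM n Nf (fun z => Nf z (b j)) x =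
      ⟪b j, b.tangentialTrace (Nf x) (fderiv ℝ Nf x)⟫ := by
    intro j
    rw [divM, stdb_eq_basisFun, ← hb, OrthonormalBasis.tangentialTrace, inner_sum]
    refine Finset.sum_congr rfl fun k _ => ?_
    rw [fderiv_clm_apply hN (differentiableAt_const _), fderiv_fun_const, Pi.zero_apply,
      ContinuousLinearMap.comp_zero, zero_add, ContinuousLinearMap.flip_apply]
    exact hsym _ (b j) (b k)
  simp_rw [hdiv]
  exact b.sum_repr' _

/-- In the level-set setting (a C² field `N` of symmetric idempotent matrices on an
open neighborhood `U` of `x`, `P(y) = I − N(y)`), for `p` differentiable at `x` and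
the rank-2 tensor field `(pP)(y)(a,b) = p(y)·⟨a, P(y) b⟩`, with all submanifold
operators taken with respect to `P(x)`:
(1) `(Div_M(pP)(x))(a) = Dp(x)[P(x) a] − p(x)·⟨κ(x), a⟩` for every `a`;
(2) consequently, `(Div_M(pP)(x))(P(x) a) = Dp(x)[P(x) a]` for every `a`. -/
theorem divM_pressure_projector (n : ℕ)
    (U : Set (E n)) (hU : IsOpen U) (x : E n) (hx : x ∈ U)
    (Nf : E n → (E n →L[ℝ] E n))
    (hC2 : ContDiffOn ℝ 2 Nf U)
    (hsym : ∀ y ∈ U, ∀ a b : E n, ⟪Nf y a, b⟫ = ⟪a, Nf y b⟫)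
    (hidem : ∀ y ∈ U, ∀ a : E n, Nf y (Nf y a) = Nf y a)
    (p : E n → ℝ) (hp : DifferentiableAt ℝ p x) :
    (∀ a : E n,
      ∑ k, fderiv ℝ (fun y => p y * ⟪a, stdb n k - Nf y (stdb n k)⟫) x
          (stdb n k - Nf x (stdb n k))
        = fderiv ℝ p x (a - Nf x a) - p x * ⟪kappa n Nf x, a⟫) ∧
    (∀ a : E n,
      ∑ k, fderiv ℝ (fun y => p y * ⟪a - Nf x a, stdb n k - Nf y (stdb n k)⟫) x
          (stdb n k - Nf x (stdb n k))
        = fderiv ℝ p x (a - Nf x a)) := by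
  have hUx : U ∈ 𝓝 x := hU.mem_nhds hx
  have hN : DifferentiableAt ℝ Nf x := (hC2.differentiableOn (by norm_num)).differentiableAt hUx
  have hidem' : ∀ y ∈ U, IsIdempotentElem (Nf y) := fun y hy =>
    ContinuousLinearMap.ext (hidem y hy)
  have hκ : kappa n Nf x = _ := kappa_eq_tangentialTrace hN
    (isSymmetric_fderiv_apply_of_eventually hN (Filter.mem_of_superset hUx hsym))
  have hnormal := (EuclideanSpace.basisFun (Fin n) ℝ).apply_tangentialTrace (hsym x hx)
    (hidem' x hx) (fderiv_mul_add_mul_of_eventually_isIdempotentElem hN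
      (Filter.mem_of_superset hUx hidem'))
  have hdiv : ∀ a : E n, _ := fun a => by
    simpa only [← stdb_eq_basisFun, ← hκ] using
      (EuclideanSpace.basisFun (Fin n) ℝ).sum_fderiv_mul_inner_sub_apply hp hN (hsym x hx)
        (hidem' x hx) a
  refine ⟨hdiv, fun a => ?_⟩
  rw [hdiv, (hidem' x hx).sub_apply_sub_apply, hκ, inner_sub_right, ← hsym x hx, hnormal,
    sub_self, mul_zero, sub_zero]
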